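/- Let α_s, α_ℓ > 0, λ > 0, h₀ > 0, k_s > 0 and T_∞ < T_f. Define T_s(x,t) = T_∞ + (T_f − T_∞)·(1 + (h₀√(π α_s)/k_s)·erf(x/(2√(α_s t))))/(1 + (h₀√(π α_s)/k_s)·erf(λ√(α_ℓ/α_s))). Then T_s satisfies the heat equation α_s ∂_{xx}T_s = ∂_t T_s for 0 < x < 2λ√(α_ℓ t), t > 0, the convective condition k_s ∂_x T_s(0,t) = (h₀/√t)(T_s(0,t) − T_∞), and T_s(s(t), t) = T_f on the free boundary s(t) = 2λ√(α_ℓ t). -/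

import Mathlib

open Real Filter Topology Set

noncomputable def erf (x : ℝ) : ℝ := (2 / Real.sqrt Real.pi) * ∫ u in (0:ℝ)..x, Real.exp (-u^2)

noncomputable def erfc (x : ℝ) : ℝ := 1 - erf x

/-
With `η = x / (2√(α t))`, every `a + b · erf η` solves `α ∂ₓₓ T = ∂ₜ T`, because
`erf'' η = -2η · erf' η` and `∂ₜ η = -η / (2t) = α (∂ₓ η)² · (-2η)`. The solid temperature has
this form with `b = A (a - T∞)`, `A = h₀√(π αₛ)/kₛ`, so the convective condition only uses
`erf' 0 = 2/√π`. On the free boundary `x = 2λ√(α_ℓ t)` the similarity variable is the constant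
`λ√(α_ℓ/αₛ)`, so numerator and denominator of the profile coincide.
-/

theorem hasDerivAt_erf (x : ℝ) : HasDerivAt erf (2 / √π * exp (-x ^ 2)) x := by
  have hc : Continuous fun u : ℝ => exp (-u ^ 2) := by fun_prop
  exact (intervalIntegral.integral_hasDerivAt_right (hc.intervalIntegrable 0 x)
    (hc.stronglyMeasurableAtFilter _ _) hc.continuousAt).const_mul _

theorem erf_zero : erf 0 = 0 := by simp [erf]

theorem erf_nonneg {x : ℝ} (hx : 0 ≤ x) : 0 ≤ erf x :=
  mul_nonneg (by positivity) (intervalIntegral.integral_nonneg hx fun _ _ => (exp_pos _).le)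

theorem hasDerivAt_div_two_sqrt_mul {α t : ℝ} (hα : 0 < α) (ht : 0 < t) (x : ℝ) :
    HasDerivAt (fun τ => x / (2 * √(α * τ))) (-(x / (2 * √(α * t))) / (2 * t)) t := by
  have hαt : 0 < α * t := mul_pos hα ht
  have h := (((hasDerivAt_id t).const_mul α).sqrt hαt.ne').const_mul 2
  refine ((hasDerivAt_const t x).div h (by positivity)).congr_deriv ?_
  simp only [id]
  field_simp
  rw [sq_sqrt hαt.le]
  ring

noncomputable def erfSimilarity (a b α x t : ℝ) : ℝ := a + b * erf (x / (2 * √(α * t)))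

section

variable (a b : ℝ) {α t : ℝ}

theorem hasDerivAt_erfSimilarity_space (x : ℝ) :
    HasDerivAt (fun y => erfSimilarity a b α y t)
      (b * (2 / √π * exp (-(x / (2 * √(α * t))) ^ 2)) / (2 * √(α * t))) x := by
  refine ((((hasDerivAt_erf _).comp x ((hasDerivAt_id x).div_const _)).const_mul b).const_add a
    ).congr_deriv ?_
  simp only [id]
  ring

theorem hasDerivAt_erfSimilarity_time (hα : 0 < α) (ht : 0 < t) (x : ℝ) :
    HasDerivAt (fun τ => erfSimilarity a b α x τ)
      (b * (2 / √π * exp (-(x / (2 * √(α * t))) ^ 2)) *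
        (-(x / (2 * √(α * t))) / (2 * t))) t :=
  (((hasDerivAt_erf _).comp t (hasDerivAt_div_two_sqrt_mul hα ht x)).const_mul b).const_add a
    |>.congr_deriv (by ring)

theorem erfSimilarity_heat (hα : 0 < α) (ht : 0 < t) (x : ℝ) :
    α * deriv (deriv fun y => erfSimilarity a b α y t) x =
      deriv (fun τ => erfSimilarity a b α x τ) t := by
  rw [funext fun y => (hasDerivAt_erfSimilarity_space a b (α := α) (t := t) y).deriv,
    (hasDerivAt_erfSimilarity_time a b hα ht x).deriv]
  have hs_sq : (2 * √(α * t)) ^ 2 = 4 * α * t := by rw [mul_pow, sq_sqrt (by positivity)]; ring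
  have hs : 2 * √(α * t) ≠ 0 := by positivity
  generalize 2 * √(α * t) = s at hs_sq hs ⊢
  have hxx : HasDerivAt (fun y => b * (2 / √π * exp (-(y / s) ^ 2)) / s)
      (b * (2 / √π * (exp (-(x / s) ^ 2) * -(2 * (x / s) * (1 / s)))) / s) x := by
    refine ((((((hasDerivAt_id x).div_const s).fun_pow 2).fun_neg.exp.const_mul _).const_mul b
      ).div_const s).congr_deriv ?_
    simp only [id]
    ring
  rw [hxx.deriv]
  field_simp
  rw [hs_sq]
  ring

theorem deriv_erfSimilarity_space_zero (α t : ℝ) :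
    deriv (fun y => erfSimilarity a b α y t) 0 = b / √(π * α * t) := by
  rw [(hasDerivAt_erfSimilarity_space a b 0).deriv, mul_assoc, sqrt_mul pi_pos.le,
    zero_div, zero_pow two_ne_zero, neg_zero, exp_zero]
  ring

theorem erfSimilarity_space_zero (α t : ℝ) : erfSimilarity a b α 0 t = a := by
  simp [erfSimilarity, erf_zero]

theorem erfSimilarity_two_mul_sqrt (hα : 0 < α) (ht : 0 < t) (l β : ℝ) :
    erfSimilarity a b α (2 * l * √(β * t)) t = a + b * erf (l * √(β / α)) := by
  have : 0 < √t := sqrt_pos.2 ht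
  have : 0 < √α := sqrt_pos.2 hα
  rw [erfSimilarity, sqrt_mul' β ht.le, sqrt_mul hα.le, sqrt_div' β hα.le]
  field_simp

end

theorem solid_phase_solution_verification_general (αs αl l h0 ks Tinf Tf : ℝ)
    (hαs : 0 < αs) (hl : 0 < l) (hh0 : 0 < h0) (hks : 0 < ks)
    (Ts : ℝ → ℝ → ℝ)
    (hTs : ∀ x t, Ts x t =
      Tinf + (Tf - Tinf) * (1 + h0 * Real.sqrt (Real.pi * αs) / ks * erf (x / (2 * Real.sqrt (αs * t))))
        / (1 + h0 * Real.sqrt (Real.pi * αs) / ks * erf (l * Real.sqrt (αl / αs)))) :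
    (∀ x t, 0 < t → 0 < x → x < 2 * l * Real.sqrt (αl * t) →
      αs * deriv (deriv (fun y => Ts y t)) x = deriv (fun τ => Ts x τ) t) ∧
    (∀ t, 0 < t →
      ks * deriv (fun y => Ts y t) 0 = h0 / Real.sqrt t * (Ts 0 t - Tinf)) ∧
    (∀ t, 0 < t → Ts (2 * l * Real.sqrt (αl * t)) t = Tf) := by
  set A := h0 * √(π * αs) / ks with hA
  set D := 1 + A * erf (l * √(αl / αs))
  have hD : D ≠ 0 := by
    have := erf_nonneg (x := l * √(αl / αs)) (by positivity)
    positivity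
  obtain rfl : Ts = erfSimilarity (Tinf + (Tf - Tinf) / D) ((Tf - Tinf) / D * A) αs := by
    ext x t
    rw [hTs, erfSimilarity]
    ring
  refine ⟨fun x t ht _ _ => erfSimilarity_heat _ _ hαs ht x, fun t ht => ?_, fun t ht => ?_⟩
  · rw [deriv_erfSimilarity_space_zero, erfSimilarity_space_zero, sqrt_mul' _ ht.le, hA]
    have : 0 < √t := sqrt_pos.2 ht
    have : 0 < √(π * αs) := sqrt_pos.2 (by positivity)
    field_simp
    ring
  · rw [erfSimilarity_two_mul_sqrt _ _ hαs ht]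
    field_simp
    ring

theorem solid_phase_solution_verification (αs αl l h0 ks Tinf Tf : ℝ)
    (hαs : 0 < αs) (hαl : 0 < αl) (hl : 0 < l) (hh0 : 0 < h0) (hks : 0 < ks)
    (hT : Tinf < Tf)
    (Ts : ℝ → ℝ → ℝ)
    (hTs : ∀ x t, Ts x t =
      Tinf + (Tf - Tinf) * (1 + h0 * Real.sqrt (Real.pi * αs) / ks * erf (x / (2 * Real.sqrt (αs * t))))
        / (1 + h0 * Real.sqrt (Real.pi * αs) / ks * erf (l * Real.sqrt (αl / αs)))) :
    (∀ x t, 0 < t → 0 < x → x < 2 * l * Real.sqrt (αl * t) →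
      αs * deriv (deriv (fun y => Ts y t)) x = deriv (fun τ => Ts x τ) t) ∧
    (∀ t, 0 < t →
      ks * deriv (fun y => Ts y t) 0 = h0 / Real.sqrt t * (Ts 0 t - Tinf)) ∧
    (∀ t, 0 < t → Ts (2 * l * Real.sqrt (αl * t)) t = Tf) :=
  solid_phase_solution_verification_general αs αl l h0 ks Tinf Tf hαs hl hh0 hks Ts hTs
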